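/- arXiv:1807.07458 — 5 statements merged into one kernel-verified Lean document; each statement's English description precedes it below -/
import Mathlib

section
/- Let k and n be positive integers, m = kn+1, and T ∈ T_n^k. Then the successor function x ↦ (value reached from x by one move of the walk) is a permutation of {1,2,…,m+n}; that is, every value in {1,…,m+n} has exactly one successor and exactly one predecessor under the walk rules. -/
open scoped Classical

/-- Number of North steps (letters `true`) among the first `i` letters of `w`. -/
def upCount (w : List Bool) (i : ℕ) : ℕ := (w.take i).count true

/-- Number of East steps (letters `false`) among the first `i` letters of `w`. -/
def rightCount (w : List Bool) (i : ℕ) : ℕ := (w.take i).count false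

/-- `w` is an `(m,n)`-Dyck path: a word with `n` North letters (`true`) and `m` East
letters (`false`), each of whose prefixes with `b` North and `a` East letters
satisfies `b*m - a*n ≥ 0`. -/
def IsDyck (m n : ℕ) (w : List Bool) : Prop :=
  w.length = m + n ∧ w.count true = n ∧
  ∀ i, n * rightCount w i ≤ m * upCount w i

/-- The rank of the `(i+1)`-st step (0-indexed `i`) of `w`, namely `b*m - a*n` where
`b` and `a` are the numbers of North and East letters among the first `i` letters. -/
def rank (m n : ℕ) (w : List Bool) (i : ℕ) : ℤ :=
  (m : ℤ) * upCount w i - (n : ℤ) * rightCount w i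

/-- The sweep map: list the steps of `w` in increasing order of their ranks. -/
def sweep (m n : ℕ) (w : List Bool) : List Bool :=
  (((List.range w.length).mergeSort
      (fun i j => decide (rank m n w i ≤ rank m n w j))).map
    (fun i => w.getD i false))

/-- The word `EN(w)`: list the steps of `w` in increasing order of their end ranks
(the end rank of the `(i+1)`-st step is `rank w (i+1)`). -/
def sweepEN (m n : ℕ) (w : List Bool) : List Bool :=
  (((List.range w.length).mergeSort
      (fun i j => decide (rank m n w (i + 1) ≤ rank m n w (j + 1)))).map
    (fun i => w.getD i false))

/-- One step of the filling algorithm: place entry `p.1` according to letter `p.2`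
(`true` = S : start a new column; `false` = W : put it below the smallest active
entry, an active entry being the current bottom entry of a column of height `< k+1`). -/
def fillStep (k : ℕ) (cols : List (List ℕ)) (p : ℕ × Bool) : List (List ℕ) :=
  if p.2 then cols ++ [[p.1]]
  else
    match ((List.range cols.length).filter
        (fun j => (cols.getD j []).length < k + 1)).argmin
        (fun j => (cols.getD j []).getLastD 0) with
    | none => cols
    | some j => cols.set j ((cols.getD j []) ++ [p.1])

/-- The state (list of columns, each recorded top to bottom) of the filling algorithm
after the entries `1, …, t` have been placed according to the first `t` letters of `w`. -/
def fillColsUpTo (k : ℕ) (w : List Bool) (t : ℕ) : List (List ℕ) :=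
  ((List.range t).map (fun i => (i + 1, w.getD i false))).foldl (fillStep k) []

/-- The final state of the filling algorithm on the word `w` (entries
`1, …, m+n-1` placed, i.e. all letters but the last one processed). -/
def fillCols (k : ℕ) (w : List Bool) : List (List ℕ) :=
  fillColsUpTo k w (w.length - 1)

/-- The tableau `T(D)` produced by the filling algorithm, as a function
(row, column) ↦ entry, rows and columns 0-indexed. -/
def fillTableau (k n : ℕ) (w : List Bool) : Fin (k + 1) → Fin n → ℕ :=
  fun i j => ((fillCols k w).getD j []).getD i 0

/-- `T` fills the `(k+1) × n` array with `1, …, (k+1)n`, increasing along rows and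
columns. -/
def IsFilling (k n : ℕ) (T : Fin (k + 1) → Fin n → ℕ) : Prop :=
  (∀ i j, T i j ∈ Finset.Icc 1 ((k + 1) * n)) ∧
  Function.Injective (fun p : Fin (k + 1) × Fin n => T p.1 p.2) ∧
  (∀ i, StrictMono (T i)) ∧
  (∀ j, StrictMono (fun i => T i j))

/-- For all entries `a < b < c < d` of `T` with `d` directly below `a`, the entries
`b` and `c` do not lie in the same column. -/
def NoBadQuadruple (k n : ℕ) (T : Fin (k + 1) → Fin n → ℕ) : Prop :=
  ∀ (i : Fin (k + 1)) (hi : (i : ℕ) + 1 < k + 1) (j : Fin n)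
    (r r' : Fin (k + 1)) (c : Fin n), r < r' →
      ¬ (T i j < T r c ∧ T r c < T r' c ∧ T r' c < T ⟨(i : ℕ) + 1, hi⟩ j)

/-- The family `𝒯ₙᵏ` of tableaux. -/
def IsFussTableau (k n : ℕ) (T : Fin (k + 1) → Fin n → ℕ) : Prop :=
  IsFilling k n T ∧ NoBadQuadruple k n T

/-- A value `r` is marked for `T` when `r - 1` is a bottom-row entry of `T`. -/
def Marked (k n : ℕ) (T : Fin (k + 1) → Fin n → ℕ) (r : ℕ) : Prop :=
  ∃ j : Fin n, T (Fin.last k) j + 1 = r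

/-- One move of the walk `w(T)` on the values `1, …, M` (where `M = m + n`):
from a row-1 entry `x` move to `r + 1` where `r` is the bottom entry of the column
of `x`; from an entry `x` of one of the rows `2, …, k+1` move to the largest
unmarked value `≤ r`, where `r` is the entry directly above `x`; from `x = M`
move to the largest unmarked value `< M`. -/
noncomputable def walkStep (k n M : ℕ) (T : Fin (k + 1) → Fin n → ℕ) (x : ℕ) : ℕ :=
  if h : ∃ j : Fin n, T 0 j = x then
    T (Fin.last k) (Classical.choose h) + 1
  else if h2 : ∃ p : Fin (k + 1) × Fin n, T p.1 p.2 = x then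
    let p := Classical.choose h2
    ((((Finset.Icc 1 M).filter
        (fun y => y ≤ T (⟨(p.1 : ℕ) - 1, lt_of_le_of_lt (Nat.sub_le _ _) p.1.2⟩ : Fin (k + 1)) p.2
          ∧ ¬ Marked k n T y))).max).getD 0
  else
    ((((Finset.Icc 1 M).filter (fun y => y < M ∧ ¬ Marked k n T y))).max).getD 0

/-- The area of the path `w`: the number of lattice cells of the `m × n` rectangle
lying below the path whose interiors lie entirely above the diagonal.
The cell in column `x` and row `y` (0-indexed) has its interior above the diagonal
iff `n*(x+1) ≤ m*y`, and lies below the path iff the `(y+1)`-st North step of `w`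
occurs before the `(x+1)`-st East step. -/
def nthLetterIdx (w : List Bool) (b : Bool) (j : ℕ) : ℕ :=
  (((List.range w.length).filter (fun i => w.getD i false = b))).getD j 0

def area (m n : ℕ) (w : List Bool) : ℕ :=
  ((Finset.range m ×ˢ Finset.range n).filter
    (fun p => n * (p.1 + 1) ≤ m * p.2 ∧
      nthLetterIdx w true p.2 < nthLetterIdx w false p.1)).card

/-- The reduction `red(T)`: delete column 1 and replace each remaining entry `i` by
`i` minus the number of column-1 entries smaller than `i`. -/
def red (k n : ℕ) (T : Fin (k + 1) → Fin n → ℕ) : Fin (k + 1) → Fin (n - 1) → ℕ :=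
  fun i j =>
    let v := T i ⟨(j : ℕ) + 1, by have := j.2; omega⟩
    v - (Finset.univ.filter
      (fun u : Fin (k + 1) => T u ⟨0, by have := j.2; omega⟩ < v)).card

/-- The (finite) set of `(m,n)`-Dyck paths as a `Finset` of words. -/
noncomputable def dyckFinset (m n : ℕ) : Finset (List Bool) :=
  ((Finset.univ : Finset (Fin (m + n) → Bool)).image List.ofFn).filter
    (fun w => IsDyck m n w)


/-!
A move from a row-1 entry lands on a marked value, and distinct row-1 entries land on distinct
marked values because the bottom row is injective. Every other move starts at an entry `x` below
row 1, or at `M = m + n`, and lands on the largest unmarked value `≤ r`, where `r` is the entry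
above `x` (resp. `r = M - 1 = (k+1)n`). Here `x ↦ r` is injective, and `r ↦` (largest unmarked
value `≤ r`) is strictly increasing on these `r`, because `r + 1` is unmarked whenever `r` is not a
bottom-row entry. So the walk step is an injective self-map of the finite set `{1, …, M}`.
-/

-- `0` when no element of `s` is `≤ r`.
noncomputable def greatestBelow (s : Finset ℕ) (r : ℕ) : ℕ :=
  ((s.filter (· ≤ r)).max).getD 0

section greatestBelow

variable {s : Finset ℕ} {a r r' : ℕ}

theorem greatestBelow_mem_filter (ha : a ∈ s) (har : a ≤ r) :
    greatestBelow s r ∈ s.filter (· ≤ r) := by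
  have hne : (s.filter (· ≤ r)).Nonempty := ⟨a, Finset.mem_filter.2 ⟨ha, har⟩⟩
  rw [greatestBelow, ← Finset.coe_max' hne]
  exact Finset.max'_mem _ hne

theorem le_greatestBelow (ha : a ∈ s) (har : a ≤ r) : a ≤ greatestBelow s r := by
  have hmem : a ∈ s.filter (· ≤ r) := Finset.mem_filter.2 ⟨ha, har⟩
  rw [greatestBelow, ← Finset.coe_max' ⟨a, hmem⟩]
  exact Finset.le_max' _ a hmem

theorem greatestBelow_lt_greatestBelow (ha : a ∈ s) (har : a ≤ r) (hr : r + 1 ∈ s)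
    (hrr' : r < r') : greatestBelow s r < greatestBelow s r' :=
  calc greatestBelow s r ≤ r := (Finset.mem_filter.1 (greatestBelow_mem_filter ha har)).2
    _ < r + 1 := r.lt_succ_self
    _ ≤ greatestBelow s r' := le_greatestBelow hr hrr'

theorem greatestBelow_injOn (ha : a ∈ s) (N : ℕ) :
    Set.InjOn (greatestBelow s) {r | a ≤ r ∧ r ≤ N ∧ (r + 1 ∈ s ∨ r = N)} := by
  have hlt : ∀ r r', a ≤ r → (r + 1 ∈ s ∨ r = N) → r' ≤ N → r < r' →
      greatestBelow s r < greatestBelow s r' := by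
    rintro r r' har (hr | rfl) hr'N hrr'
    · exact greatestBelow_lt_greatestBelow ha har hr hrr'
    · omega
  intro r ⟨har, _, hr⟩ r' ⟨har', hr'N, hr'⟩ h
  by_contra hne
  rcases lt_or_gt_of_ne hne with hrr' | hr'r
  · exact (hlt r r' har hr hr'N hrr').ne h
  · exact (hlt r' r har' hr' (by omega) hr'r).ne' h

end greatestBelow

noncomputable def unmarked (k n M : ℕ) (T : Fin (k + 1) → Fin n → ℕ) : Finset ℕ :=
  (Finset.Icc 1 M).filter (fun y => ¬ Marked k n T y)

section Walk

variable {k n : ℕ} {T : Fin (k + 1) → Fin n → ℕ}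

theorem greatestBelow_unmarked (M r : ℕ) : greatestBelow (unmarked k n M T) r =
    ((Finset.Icc 1 M).filter (fun y => y ≤ r ∧ ¬ Marked k n T y)).max.getD 0 := by
  rw [greatestBelow, unmarked, Finset.filter_filter]
  simp only [and_comm]

/- `lowerValue` lists the values from which the walk makes a move of the second or third kind,
`none` standing for `M = (k+1)n + 1`; `upperValue` gives the corresponding `r`: the entry directly
above, resp. `(k+1)n`. -/
def lowerValue (T : Fin (k + 1) → Fin n → ℕ) : Option (Fin k × Fin n) → ℕ
  | none => (k + 1) * n + 1
  | some p => T p.1.succ p.2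

def upperValue (T : Fin (k + 1) → Fin n → ℕ) : Option (Fin k × Fin n) → ℕ
  | none => (k + 1) * n
  | some p => T p.1.castSucc p.2

end Walk

namespace IsFilling

variable {k n : ℕ} {T : Fin (k + 1) → Fin n → ℕ}

theorem mem_Icc (hT : IsFilling k n T) (i : Fin (k + 1)) (j : Fin n) :
    1 ≤ T i j ∧ T i j ≤ (k + 1) * n :=
  Finset.mem_Icc.1 (hT.1 i j)

theorem eq_and_eq_of_eq (hT : IsFilling k n T) {i i' : Fin (k + 1)} {j j' : Fin n}
    (h : T i j = T i' j') : i = i' ∧ j = j' :=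
  Prod.ext_iff.1 (hT.2.1 (a₁ := (i, j)) (a₂ := (i', j')) h)

theorem exists_apply_eq (hT : IsFilling k n T) {y : ℕ} (hy : y ∈ Finset.Icc 1 ((k + 1) * n)) :
    ∃ i j, T i j = y := by
  have himage : Finset.univ.image (fun p : Fin (k + 1) × Fin n => T p.1 p.2) =
      Finset.Icc 1 ((k + 1) * n) := by
    refine Finset.eq_of_subset_of_card_le ?_ ?_
    · intro z hz
      obtain ⟨p, -, rfl⟩ := Finset.mem_image.1 hz
      exact hT.1 p.1 p.2
    · rw [Finset.card_image_of_injective _ hT.2.1]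
      simp
  rw [← himage] at hy
  obtain ⟨p, -, hp⟩ := Finset.mem_image.1 hy
  exact ⟨p.1, p.2, hp⟩

theorem one_mem_unmarked (hT : IsFilling k n T) : 1 ∈ unmarked k n ((k + 1) * n + 1) T := by
  refine Finset.mem_filter.2 ⟨by simp, ?_⟩
  rintro ⟨j, hj⟩
  have := (hT.mem_Icc (Fin.last k) j).1
  omega

theorem succ_mem_unmarked (hT : IsFilling k n T) (i : Fin k) (j : Fin n) :
    T i.castSucc j + 1 ∈ unmarked k n ((k + 1) * n + 1) T := by
  have hlt : T i.castSucc j < T (Fin.last k) j := hT.2.2.2 j (Fin.castSucc_lt_last i)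
  have := (hT.mem_Icc (Fin.last k) j).2
  refine Finset.mem_filter.2 ⟨Finset.mem_Icc.2 ⟨by omega, by omega⟩, ?_⟩
  rintro ⟨j', hj'⟩
  exact (Fin.castSucc_lt_last i).ne' (hT.eq_and_eq_of_eq (Nat.succ_injective hj')).1

theorem walkStep_row_zero (hT : IsFilling k n T) (M : ℕ) (j : Fin n) :
    walkStep k n M T (T 0 j) = T (Fin.last k) j + 1 := by
  have h : ∃ j', T 0 j' = T 0 j := ⟨j, rfl⟩
  rw [walkStep, dif_pos h, (hT.2.2.1 0).injective (Classical.choose_spec h)]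

theorem walkStep_row_succ (hT : IsFilling k n T) (M : ℕ) (i : Fin k) (j : Fin n) :
    walkStep k n M T (T i.succ j) = greatestBelow (unmarked k n M T) (T i.castSucc j) := by
  have h0 : ¬ ∃ j', T 0 j' = T i.succ j := fun ⟨_, h⟩ =>
    i.succ_ne_zero (hT.eq_and_eq_of_eq h).1.symm
  have h : ∃ p : Fin (k + 1) × Fin n, T p.1 p.2 = T i.succ j := ⟨(i.succ, j), rfl⟩
  have hp : Classical.choose h = (i.succ, j) := hT.2.1 (Classical.choose_spec h)
  rw [walkStep, dif_neg h0, dif_pos h]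
  simp only [hp]
  rw [greatestBelow_unmarked]
  rfl

theorem walkStep_top (hT : IsFilling k n T) :
    walkStep k n ((k + 1) * n + 1) T ((k + 1) * n + 1) =
      greatestBelow (unmarked k n ((k + 1) * n + 1) T) ((k + 1) * n) := by
  have h : ¬ ∃ p : Fin (k + 1) × Fin n, T p.1 p.2 = (k + 1) * n + 1 := by
    rintro ⟨p, hp⟩
    have := (hT.mem_Icc p.1 p.2).2
    omega
  rw [walkStep, dif_neg fun ⟨j, hj⟩ => h ⟨(0, j), hj⟩, dif_neg h, greatestBelow_unmarked]
  simp only [Nat.lt_succ_iff]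

theorem walkStep_lowerValue (hT : IsFilling k n T) (o : Option (Fin k × Fin n)) :
    walkStep k n ((k + 1) * n + 1) T (lowerValue T o) =
      greatestBelow (unmarked k n ((k + 1) * n + 1) T) (upperValue T o) := by
  cases o with
  | none => exact hT.walkStep_top
  | some p => exact hT.walkStep_row_succ _ p.1 p.2

theorem upperValue_injective (hT : IsFilling k n T) : Function.Injective (upperValue T) := by
  have hlt : ∀ (i : Fin k) (j : Fin n), T i.castSucc j < (k + 1) * n := fun i j =>
    (hT.2.2.2 j (Fin.castSucc_lt_last i)).trans_le (hT.mem_Icc (Fin.last k) j).2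
  rintro (_ | ⟨i, j⟩) (_ | ⟨i', j'⟩) h
  · rfl
  · exact absurd h (hlt i' j').ne'
  · exact absurd h (hlt i j).ne
  · obtain ⟨hi, rfl⟩ := hT.eq_and_eq_of_eq h
    exact congrArg some (Prod.ext (Fin.castSucc_injective k hi) rfl)

theorem upperValue_mem (hT : IsFilling k n T) (hn : 0 < n) (o : Option (Fin k × Fin n)) :
    upperValue T o ∈ {r | 1 ≤ r ∧ r ≤ (k + 1) * n ∧
      (r + 1 ∈ unmarked k n ((k + 1) * n + 1) T ∨ r = (k + 1) * n)} := by
  cases o with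
  | none => exact ⟨Nat.mul_pos k.succ_pos hn, le_rfl, Or.inr rfl⟩
  | some p =>
    obtain ⟨i, j⟩ := p
    exact ⟨(hT.mem_Icc _ _).1, (hT.mem_Icc _ _).2, Or.inl (hT.succ_mem_unmarked i j)⟩

theorem walkStep_lowerValue_mem_unmarked (hT : IsFilling k n T) (hn : 0 < n)
    (o : Option (Fin k × Fin n)) :
    walkStep k n ((k + 1) * n + 1) T (lowerValue T o) ∈ unmarked k n ((k + 1) * n + 1) T := by
  rw [hT.walkStep_lowerValue]
  exact (Finset.mem_filter.1
    (greatestBelow_mem_filter hT.one_mem_unmarked (hT.upperValue_mem hn o).1)).1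

theorem Icc_subset_range_union (hT : IsFilling k n T) :
    Set.Icc 1 ((k + 1) * n + 1) ⊆ Set.range (T 0) ∪ Set.range (lowerValue T) := by
  rintro y ⟨hy1, hy⟩
  rcases Nat.lt_or_eq_of_le hy with hy | rfl
  · obtain ⟨i, j, rfl⟩ := hT.exists_apply_eq (Finset.mem_Icc.2 ⟨hy1, Nat.lt_succ_iff.1 hy⟩)
    cases i using Fin.cases with
    | zero => exact Or.inl ⟨j, rfl⟩
    | succ i => exact Or.inr ⟨some (i, j), rfl⟩
  · exact Or.inr ⟨none, rfl⟩

theorem mapsTo_walkStep (hT : IsFilling k n T) (hn : 0 < n) :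
    Set.MapsTo (walkStep k n ((k + 1) * n + 1) T)
      (Set.Icc 1 ((k + 1) * n + 1)) (Set.Icc 1 ((k + 1) * n + 1)) := by
  refine Set.MapsTo.mono_left (Set.MapsTo.union ?_ ?_) hT.Icc_subset_range_union
  · rintro _ ⟨j, rfl⟩
    rw [hT.walkStep_row_zero]
    have := (hT.mem_Icc (Fin.last k) j).2
    exact ⟨by omega, by omega⟩
  · rintro _ ⟨o, rfl⟩
    exact Finset.mem_Icc.1 (Finset.mem_filter.1 (hT.walkStep_lowerValue_mem_unmarked hn o)).1

theorem injOn_walkStep (hT : IsFilling k n T) (hn : 0 < n) :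
    Set.InjOn (walkStep k n ((k + 1) * n + 1) T) (Set.Icc 1 ((k + 1) * n + 1)) := by
  have htop : Set.InjOn (walkStep k n ((k + 1) * n + 1) T) (Set.range (T 0)) :=
    Function.Injective.injOn_range fun j j' h => by
      simp only [Function.comp_apply, hT.walkStep_row_zero] at h
      exact (hT.2.2.1 _).injective (Nat.succ_injective h)
  have hlower : Set.InjOn (walkStep k n ((k + 1) * n + 1) T) (Set.range (lowerValue T)) := by
    refine Function.Injective.injOn_range ?_
    rw [show walkStep k n ((k + 1) * n + 1) T ∘ lowerValue T =
        greatestBelow (unmarked k n ((k + 1) * n + 1) T) ∘ upperValue T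
      from funext hT.walkStep_lowerValue, ← Set.injOn_univ]
    exact (greatestBelow_injOn hT.one_mem_unmarked _).comp hT.upperValue_injective.injOn
      fun o _ => hT.upperValue_mem hn o
  have hcross : ∀ j o, walkStep k n ((k + 1) * n + 1) T (T 0 j) ≠
      walkStep k n ((k + 1) * n + 1) T (lowerValue T o) := fun j o h =>
    (Finset.mem_filter.1 (hT.walkStep_lowerValue_mem_unmarked hn o)).2
      ⟨j, by rw [← h, hT.walkStep_row_zero]⟩
  intro x hx y hy hxy
  rcases hT.Icc_subset_range_union hx with ⟨j, rfl⟩ | ⟨o, rfl⟩ <;>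
    rcases hT.Icc_subset_range_union hy with ⟨j', rfl⟩ | ⟨o', rfl⟩
  · exact htop ⟨j, rfl⟩ ⟨j', rfl⟩ hxy
  · exact absurd hxy (hcross j o')
  · exact absurd hxy.symm (hcross j' o)
  · exact hlower ⟨o, rfl⟩ ⟨o', rfl⟩ hxy

theorem bijOn_walkStep (hT : IsFilling k n T) (hn : 0 < n) :
    Set.BijOn (walkStep k n ((k + 1) * n + 1) T)
      (Set.Icc 1 ((k + 1) * n + 1)) (Set.Icc 1 ((k + 1) * n + 1)) :=
  ((Set.finite_Icc _ _).injOn_iff_bijOn_of_mapsTo (hT.mapsTo_walkStep hn)).1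
    (hT.injOn_walkStep hn)

end IsFilling

theorem statement3_general (k n : ℕ) (hn : 0 < n) (m : ℕ) (hm : m = k * n + 1)
    (T : Fin (k + 1) → Fin n → ℕ) (hT : IsFussTableau k n T) :
    Set.BijOn (walkStep k n (m + n) T) (Set.Icc 1 (m + n)) (Set.Icc 1 (m + n)) := by
  have hM : m + n = (k + 1) * n + 1 := by rw [hm]; ring
  rw [hM]
  exact hT.1.bijOn_walkStep hn

/-- For `m = kn+1` and `T ∈ 𝒯ₙᵏ`, the successor function of the
walk is a permutation of `{1, 2, …, m+n}`. -/
theorem statement3 (k n : ℕ) (hk : 0 < k) (hn : 0 < n) (m : ℕ) (hm : m = k * n + 1)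
    (T : Fin (k + 1) → Fin n → ℕ) (hT : IsFussTableau k n T) :
    Set.BijOn (walkStep k n (m + n) T) (Set.Icc 1 (m + n)) (Set.Icc 1 (m + n)) :=
  statement3_general k n hn m hm T hT
end

section
/- Let k ≥ 1 and n ≥ 2 be integers, and set m = kn+1, n' = n−1, m' = kn'+1. Then for all integers a and b with 0 ≤ a ≤ m', 0 ≤ b ≤ n', and a + b < m' + n', the inequality b·m' − a·n' ≥ 0 implies b·m − a·n ≥ 0. -/
open scoped Classical

/-- For integers `k ≥ 1`, `n ≥ 2`, `m = kn+1`, `n' = n-1`,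
`m' = kn'+1`, and all integers `0 ≤ a ≤ m'`, `0 ≤ b ≤ n'` with `a + b < m' + n'`,
if `b·m' - a·n' ≥ 0` then `b·m - a·n ≥ 0`. -/
theorem statement5 (k n : ℤ) (hk : 1 ≤ k) (hn : 2 ≤ n)
    (m n' m' : ℤ) (hm : m = k * n + 1) (hn' : n' = n - 1) (hm' : m' = k * n' + 1)
    (a b : ℤ) (ha0 : 0 ≤ a) (ha : a ≤ m') (hb0 : 0 ≤ b) (hb : b ≤ n')
    (hab : a + b < m' + n') (h : 0 ≤ b * m' - a * n') :
    0 ≤ b * m - a * n := by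
  subst hm hn' hm'
  rcases eq_or_lt_of_le hb0 with hb0' | hb0'
  · -- b = 0, so a*(n-1) ≤ 0, hence a = 0
    have : a = 0 := by nlinarith
    simp [← hb0', this]
  · -- b > 0: show b*m' - a*n' ≥ 1
    have key : 1 ≤ b * (k * (n - 1) + 1) - a * (n - 1) := by
      rcases eq_or_lt_of_le h with heq | hlt
      · -- b*m' = a*n' with 0 < b forces n' ∣ b
        exfalso
        have hdvd : (n - 1) ∣ b := by
          have : (n - 1) ∣ b * (k * (n - 1) + 1) := ⟨a, by linarith⟩
          have h2 : (n - 1) ∣ b * (k * (n - 1)) := ⟨b * k, by ring⟩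
          have := this
          have : (n - 1) ∣ b * (k * (n - 1) + 1) - b * (k * (n - 1)) :=
            dvd_sub ‹(n - 1) ∣ b * (k * (n - 1) + 1)› h2
          simpa [mul_add, mul_one] using this
        have hbe : b = n - 1 := le_antisymm hb (Int.le_of_dvd hb0' hdvd)
        have hae : a = k * (n - 1) + 1 := by
          have hn1 : (0:ℤ) < n - 1 := by linarith
          have : a * (n - 1) = (k * (n - 1) + 1) * (n - 1) := by
            subst hbe; linarith [heq, mul_comm a (n - 1), mul_comm (k * (n - 1) + 1) (n - 1)]
          exact mul_right_cancel₀ (ne_of_gt hn1) this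
        omega
      · omega
    nlinarith [key]
end

section
/- Let k and n be positive integers and m = kn+1. For every D ∈ D_{m,n}, the filling algorithm applied to the step word of D never halts prematurely: at every stage i ≤ m+n−1 at which the i-th letter is W, at least one active entry exists, so the algorithm successfully places all of 1,2,…,m+n−1 and produces a complete filling of the (k+1)×n array. -/
open scoped Classical

/-! The filling state after `t` letters has one column per North step read so far, `t` entries
in all, and columns of height at most `k + 1`. A `W` step can only be blocked when all columns
are full, i.e. when the path so far ends on the line `a = k b`; the Dyck condition after that
East step gives `n (k b + 1) ≤ (k n + 1) b`, hence `b = n` and `t = (k + 1) n = m + n - 1`.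
So no step before the last one is blocked. The last letter of a Dyck path is `E`, so the
final state has `n` columns holding `(k + 1) n` entries, and all of them are full. -/

section Counts

variable {w : List Bool} {t : ℕ}

lemma take_add_one_eq_append_getD (ht : t < w.length) :
    w.take (t + 1) = w.take t ++ [w.getD t false] := by
  rw [List.take_add_one, List.getD_eq_getElem _ _ ht, List.getElem?_eq_getElem ht]
  rfl

lemma upCount_add_one (ht : t < w.length) :
    upCount w (t + 1) = upCount w t + (w.getD t false).toNat := by
  rw [upCount, upCount, take_add_one_eq_append_getD ht, List.count_append]
  cases w.getD t false <;> rfl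

lemma rightCount_add_one (ht : t < w.length) :
    rightCount w (t + 1) = rightCount w t + (!w.getD t false).toNat := by
  rw [rightCount, rightCount, take_add_one_eq_append_getD ht, List.count_append]
  cases w.getD t false <;> rfl

lemma upCount_add_rightCount (ht : t ≤ w.length) : upCount w t + rightCount w t = t := by
  rw [upCount, rightCount, List.count_true_add_count_false, List.length_take]
  omega

lemma upCount_le_count_true : upCount w t ≤ w.count true :=
  (w.take_sublist t).count_le true

end Counts

section Dyck

variable {w : List Bool}

lemma IsDyck.upCount_sub_one {m n : ℕ} (hm : 0 < m) (hD : IsDyck m n w) :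
    upCount w (m + n - 1) = n := by
  obtain ⟨hlen, hcount, hdyck⟩ := hD
  obtain ⟨t, ht⟩ : ∃ t, t + 1 = m + n := ⟨m + n - 1, by omega⟩
  rw [show m + n - 1 = t by omega]
  have htw : t < w.length := by omega
  have hup : upCount w (t + 1) = n := by rw [ht, ← hlen, upCount, List.take_length, hcount]
  rw [upCount_add_one htw] at hup
  cases hlast : w.getD t false
  · rwa [hlast, Bool.toNat_false, add_zero] at hup
  · -- the prefix before a final North step would end at `(m, n - 1)`, below the diagonal
    simp only [hlast, Bool.toNat_true] at hup
    have hsplit := upCount_add_rightCount htw.le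
    have h := hdyck t
    obtain ⟨n, rfl⟩ : ∃ n', n = n' + 1 := ⟨n - 1, by omega⟩
    rw [show rightCount w t = m by omega, show upCount w t = n by omega] at h
    nlinarith

lemma IsDyck.upCount_eq_of_rightCount_eq_mul {k n t : ℕ} (hD : IsDyck (k * n + 1) n w)
    (ht : t < w.length) (hE : w.getD t false = false)
    (hline : rightCount w t = k * upCount w t) : upCount w t = n := by
  have h := hD.2.2 (t + 1)
  rw [rightCount_add_one ht, upCount_add_one ht, hE, hline] at h
  have hle : upCount w t ≤ n := hD.2.1 ▸ upCount_le_count_true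
  simp only [Bool.not_false, Bool.toNat_true, Bool.toNat_false, add_zero] at h
  nlinarith

end Dyck

lemma List.eq_of_forall_le_of_sum_eq {l : List ℕ} {K : ℕ} (hle : ∀ x ∈ l, x ≤ K)
    (hsum : l.sum = l.length * K) : ∀ x ∈ l, x = K := by
  by_contra! ⟨x, hx, hne⟩
  have hlt := List.sum_lt_sum id (fun _ => K) hle ⟨x, hx, lt_of_le_of_ne (hle x hx) hne⟩
  simp [List.map_const', hsum] at hlt

lemma List.sum_map_length_set_append_singleton {α : Type*} {cols : List (List α)} {j : ℕ}
    (hj : j < cols.length) (x : α) :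
    ((cols.set j (cols.getD j [] ++ [x])).map List.length).sum
      = (cols.map List.length).sum + 1 := by
  induction cols generalizing j with
  | nil => simp at hj
  | cons c cols ih =>
    cases j with
    | zero => simp; omega
    | succ j =>
      simp only [List.set_cons_succ, List.getD_cons_succ, List.map_cons, List.sum_cons]
      rw [ih (by simpa using hj)]
      omega

section Filling

variable {k : ℕ}

lemma exists_fillStep_false_eq_set {cols : List (List ℕ)} (x : ℕ)
    (h : ∃ j < cols.length, (cols.getD j []).length < k + 1) :
    ∃ j < cols.length, (cols.getD j []).length < k + 1 ∧
      fillStep k cols (x, false) = cols.set j (cols.getD j [] ++ [x]) := by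
  set active := (List.range cols.length).filter (fun j => (cols.getD j []).length < k + 1)
  have hne : active ≠ [] := by
    obtain ⟨j, hj, hjl⟩ := h
    refine List.ne_nil_of_mem (a := j) ?_
    simp only [active, List.mem_filter, List.mem_range, decide_eq_true_eq]
    exact ⟨hj, hjl⟩
  obtain ⟨j, hj⟩ := Option.ne_none_iff_exists'.mp
    (mt (List.argmin_eq_none (f := fun j => (cols.getD j []).getLastD 0)).mp hne)
  have hmem : j ∈ active := List.argmin_mem hj
  simp only [active, List.mem_filter, List.mem_range, decide_eq_true_eq] at hmem
  refine ⟨j, hmem.1, hmem.2, ?_⟩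
  simp only [fillStep, Bool.false_eq_true, if_false]
  rw [hj]

structure FillInvariant (k : ℕ) (w : List Bool) (t : ℕ) (cols : List (List ℕ)) : Prop where
  length_eq : cols.length = upCount w t
  sum_length_eq : (cols.map List.length).sum = t
  length_le : ∀ c ∈ cols, c.length ≤ k + 1

variable {n t : ℕ} {w : List Bool} {cols : List (List ℕ)}

theorem FillInvariant.exists_active (hinv : FillInvariant k w t cols)
    (hD : IsDyck (k * n + 1) n w) (ht : t < k * n + 1 + n - 1) (hE : w.getD t false = false) :
    ∃ j < cols.length, (cols.getD j []).length < k + 1 := by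
  by_contra! hfull
  have hfull' : ∀ c ∈ cols, k + 1 ≤ c.length := by
    intro c hc
    obtain ⟨j, hj, rfl⟩ := List.getElem_of_mem hc
    have hj' := hfull j hj
    rwa [List.getD_eq_getElem _ _ hj] at hj'
  have hge := List.card_nsmul_le_sum _ _ (List.forall_mem_map.mpr hfull')
  have hle := List.sum_le_card_nsmul _ _ (List.forall_mem_map.mpr hinv.length_le)
  simp only [List.length_map, smul_eq_mul, hinv.sum_length_eq, hinv.length_eq] at hge hle
  have htw : t < w.length := by rw [hD.1]; omega
  have hsplit := upCount_add_rightCount htw.le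
  have hline : rightCount w t = k * upCount w t := by nlinarith
  rw [hD.upCount_eq_of_rightCount_eq_mul htw hE hline] at hge
  have hsize : n * (k + 1) = k * n + n := by ring
  omega

theorem FillInvariant.succ (hinv : FillInvariant k w t cols)
    (hD : IsDyck (k * n + 1) n w) (ht : t < k * n + 1 + n - 1) :
    FillInvariant k w (t + 1) (fillStep k cols (t + 1, w.getD t false)) := by
  have htw : t < w.length := by rw [hD.1]; omega
  cases hletter : w.getD t false with
  | true =>
    have hstep : fillStep k cols (t + 1, true) = cols ++ [[t + 1]] := rfl
    rw [hstep]
    refine ⟨?_, ?_, ?_⟩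
    · rw [List.length_append, upCount_add_one htw, hletter, hinv.length_eq]
      rfl
    · simp [hinv.sum_length_eq]
    · simp only [List.mem_append, List.mem_singleton]
      rintro c (hc | rfl)
      exacts [hinv.length_le c hc, by simp]
  | false =>
    obtain ⟨j, hj, hjl, hstep⟩ :=
      exists_fillStep_false_eq_set (t + 1) (hinv.exists_active hD ht hletter)
    rw [hstep]
    refine ⟨?_, ?_, ?_⟩
    · rw [List.length_set, upCount_add_one htw, hletter, hinv.length_eq]
      rfl
    · rw [List.sum_map_length_set_append_singleton hj, hinv.sum_length_eq]
    · intro c hc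
      rcases List.mem_or_eq_of_mem_set hc with hc | rfl
      · exact hinv.length_le c hc
      · simpa using hjl

theorem fillInvariant_fillColsUpTo (hD : IsDyck (k * n + 1) n w) :
    ∀ t ≤ k * n + 1 + n - 1, FillInvariant k w t (fillColsUpTo k w t)
  | 0, _ => ⟨by simp [fillColsUpTo, upCount], by simp [fillColsUpTo], by simp [fillColsUpTo]⟩
  | t + 1, ht => by
    rw [fillColsUpTo, List.range_succ, List.map_append, List.foldl_append]
    exact (fillInvariant_fillColsUpTo hD t (by omega)).succ hD (by omega)

end Filling

theorem statement7_general (k n : ℕ) (m : ℕ) (hm : m = k * n + 1)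
    (D : List Bool) (hD : IsDyck m n D) :
    (∀ t < m + n - 1, D.getD t false = false →
      ∃ j < (fillColsUpTo k D t).length,
        ((fillColsUpTo k D t).getD j []).length < k + 1) ∧
    (fillCols k D).length = n ∧
    (∀ j < n, ((fillCols k D).getD j []).length = k + 1) := by
  subst hm
  have hinv := fillInvariant_fillColsUpTo hD
  have hfinal : fillCols k D = fillColsUpTo k D (k * n + 1 + n - 1) := by rw [fillCols, hD.1]
  obtain ⟨hlen, hsum, hle⟩ := hinv _ le_rfl
  rw [hD.upCount_sub_one (Nat.succ_pos _)] at hlen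
  refine ⟨fun t ht hE => (hinv t ht.le).exists_active hD ht hE, by rw [hfinal, hlen], ?_⟩
  have hfull := List.eq_of_forall_le_of_sum_eq (l := (fillCols k D).map List.length)
    (K := k + 1) (List.forall_mem_map.mpr (hfinal ▸ hle))
    (by rw [hfinal, hsum, List.length_map, hlen]; ring_nf; omega)
  intro j hj
  have hj' : j < (fillCols k D).length := by rwa [hfinal, hlen]
  rw [List.getD_eq_getElem _ _ hj']
  exact hfull _ (List.mem_map_of_mem (List.getElem_mem hj'))

/-- For `m = kn+1` and `D ∈ 𝒟_{m,n}`, the filling algorithm never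
halts prematurely: at every stage at which the next letter is `W` there is an
active entry, and the algorithm produces a complete filling of the `(k+1) × n`
array. -/
theorem statement7 (k n : ℕ) (hk : 0 < k) (hn : 0 < n) (m : ℕ) (hm : m = k * n + 1)
    (D : List Bool) (hD : IsDyck m n D) :
    (∀ t < m + n - 1, D.getD t false = false →
      ∃ j < (fillColsUpTo k D t).length,
        ((fillColsUpTo k D t).getD j []).length < k + 1) ∧
    (fillCols k D).length = n ∧
    (∀ j < n, ((fillCols k D).getD j []).length = k + 1) :=
  statement7_general k n m hm D hD
end

section
/- Let k and n be positive integers. For a filling T of the (k+1)×n array define ψ(T) by ψ(T)_{i,j} = (k+1)n + 1 − T_{k+2−i, n+1−j} for 1 ≤ i ≤ k+1 and 1 ≤ j ≤ n. Then ψ maps T_n^k into T_n^k, and ψ is an involution on T_n^k (ψ(ψ(T)) = T for all T ∈ T_n^k). -/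
open scoped Classical

/-- The involution `ψ` on fillings:
`ψ(T)_{i,j} = (k+1)n + 1 - T_{k+2-i, n+1-j}` (1-indexed), written 0-indexed. -/
def psiT (k n : ℕ) (T : Fin (k + 1) → Fin n → ℕ) : Fin (k + 1) → Fin n → ℕ :=
  fun i j =>
    (k + 1) * n + 1 - T ⟨k - (i : ℕ), by omega⟩ ⟨n - 1 - (j : ℕ), by have := j.2; omega⟩

set_option maxHeartbeats 2000000 in
/-- `ψ` maps `𝒯ₙᵏ` into `𝒯ₙᵏ` and is an involution on `𝒯ₙᵏ`. -/
theorem statement12 (k n : ℕ) (hk : 0 < k) (hn : 0 < n) :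
    ∀ T : Fin (k + 1) → Fin n → ℕ, IsFussTableau k n T →
      IsFussTableau k n (psiT k n T) ∧ psiT k n (psiT k n T) = T := by
  intro T hT
  obtain ⟨⟨hbd, hinj, hrow, hcol⟩, hnbq⟩ := hT
  have hb : ∀ i j, 1 ≤ T i j ∧ T i j ≤ (k + 1) * n := by
    intro i j; simpa [Finset.mem_Icc] using hbd i j
  refine ⟨⟨⟨?_, ?_, ?_, ?_⟩, ?_⟩, ?_⟩
  · -- bounds
    intro i j
    have := hb ⟨k - (i : ℕ), by omega⟩ ⟨n - 1 - (j : ℕ), by have := j.2; omega⟩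
    simp only [psiT, Finset.mem_Icc]
    omega
  · -- injective
    intro p q h
    simp only [psiT] at h
    have h1 := hb ⟨k - (p.1 : ℕ), by omega⟩ ⟨n - 1 - (p.2 : ℕ), by have := p.2.2; omega⟩
    have h2 := hb ⟨k - (q.1 : ℕ), by omega⟩ ⟨n - 1 - (q.2 : ℕ), by have := q.2.2; omega⟩
    have heq : T ⟨k - (p.1 : ℕ), by omega⟩ ⟨n - 1 - (p.2 : ℕ), by have := p.2.2; omega⟩
        = T ⟨k - (q.1 : ℕ), by omega⟩ ⟨n - 1 - (q.2 : ℕ), by have := q.2.2; omega⟩ := by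
      omega
    have := hinj (show (fun p : Fin (k + 1) × Fin n => T p.1 p.2)
        (⟨k - (p.1 : ℕ), by omega⟩, ⟨n - 1 - (p.2 : ℕ), by have := p.2.2; omega⟩)
      = (fun p : Fin (k + 1) × Fin n => T p.1 p.2)
        (⟨k - (q.1 : ℕ), by omega⟩, ⟨n - 1 - (q.2 : ℕ), by have := q.2.2; omega⟩) from heq)
    simp only [Prod.mk.injEq, Fin.mk.injEq] at this
    have hp1 := p.1.2; have hq1 := q.1.2; have hp2 := p.2.2; have hq2 := q.2.2
    have e1 : (p.1 : ℕ) = q.1 := by omega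
    have e2 : (p.2 : ℕ) = q.2 := by omega
    exact Prod.ext (Fin.ext e1) (Fin.ext e2)
  · -- rows strict mono
    intro i j j' hjj'
    simp only [psiT]
    have hlt : (⟨n - 1 - (j' : ℕ), by have := j'.2; omega⟩ : Fin n)
        < ⟨n - 1 - (j : ℕ), by have := j.2; omega⟩ := by
      have := j'.2
      exact Fin.mk_lt_mk.mpr (by omega)
    have := hrow ⟨k - (i : ℕ), by omega⟩ hlt
    have h1 := hb ⟨k - (i : ℕ), by omega⟩ ⟨n - 1 - (j : ℕ), by have := j.2; omega⟩
    have h2 := hb ⟨k - (i : ℕ), by omega⟩ ⟨n - 1 - (j' : ℕ), by have := j'.2; omega⟩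
    omega
  · -- cols strict mono
    intro j i i' hii'
    simp only [psiT]
    have hlt : (⟨k - (i' : ℕ), by omega⟩ : Fin (k + 1)) < ⟨k - (i : ℕ), by omega⟩ := by
      have := i'.2
      exact Fin.mk_lt_mk.mpr (by omega)
    have := hcol ⟨n - 1 - (j : ℕ), by have := j.2; omega⟩ hlt
    simp only at this
    have h1 := hb ⟨k - (i : ℕ), by omega⟩ ⟨n - 1 - (j : ℕ), by have := j.2; omega⟩
    have h2 := hb ⟨k - (i' : ℕ), by omega⟩ ⟨n - 1 - (j : ℕ), by have := j.2; omega⟩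
    omega
  · -- no bad quadruple
    intro i hi j r r' c hrr' ⟨hA, hB, hC⟩
    simp only [psiT] at hA hB hC
    have hi' : (i : ℕ) < k := by omega
    have hia : (k - ((i : ℕ) + 1)) + 1 < k + 1 := by omega
    set j' : Fin n := ⟨n - 1 - (j : ℕ), by have := j.2; omega⟩ with hj'
    set c' : Fin n := ⟨n - 1 - (c : ℕ), by have := c.2; omega⟩ with hc'
    have hbd1 := hb ⟨k - (i : ℕ), by omega⟩ j'
    have hbd2 := hb ⟨k - (r : ℕ), by omega⟩ c'
    have hbd3 := hb ⟨k - (r' : ℕ), by omega⟩ c'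
    have hbd4 := hb ⟨k - ((i : ℕ) + 1), by omega⟩ j'
    have hrlt : (⟨k - (r' : ℕ), by omega⟩ : Fin (k + 1)) < ⟨k - (r : ℕ), by omega⟩ := by
      have := r'.2
      exact Fin.mk_lt_mk.mpr (by omega)
    refine hnbq ⟨k - ((i : ℕ) + 1), by omega⟩ hia j' ⟨k - (r' : ℕ), by omega⟩ ⟨k - (r : ℕ), by omega⟩ c' hrlt ⟨?_, ?_, ?_⟩
    · omega
    · omega
    · have e : (k - ((i : ℕ) + 1)) + 1 = k - (i : ℕ) := by omega
      simp only [Fin.val_mk, e]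
      omega
  · -- involution
    funext i j
    simp only [psiT]
    have hkk : (⟨k - (k - (i : ℕ)), by omega⟩ : Fin (k + 1)) = i := Fin.ext (show k - (k - (i : ℕ)) = (i : ℕ) by have := i.2; omega)
    have hnn : (⟨n - 1 - (n - 1 - (j : ℕ)), by have := j.2; omega⟩ : Fin n) = j :=
      Fin.ext (show n - 1 - (n - 1 - (j : ℕ)) = (j : ℕ) by have := j.2; omega)
    rw [hkk, hnn]
    have := hb i j
    omega
end

section
/- Let k ≥ 1 and n ≥ 2 be integers. For every T ∈ T_n^k, the reduced tableau red(T) belongs to T_{n−1}^k. -/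
open scoped Classical

/-!
Deleting the first column and renumbering amounts to applying to the remaining entries the map
`v ↦ v - #{s ∈ S | s < v}`, where `S` is the set of first-column entries. This map is strictly
increasing off `S` and sends `[1, N] \ S` into `[1, N - #S]`, so it preserves every order relation
among the remaining entries, and with them the row and column conditions and the excluded
patterns `a < b < c < d`.
-/

open Finset

def collapse (S : Finset ℕ) (v : ℕ) : ℕ := v - #{s ∈ S | s < v}

section Collapse

variable (S : Finset ℕ)

lemma collapse_strictMonoOn : StrictMonoOn (collapse S) (↑S)ᶜ := by
  intro a ha b _ hab
  have ha : a ∉ S := ha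
  have hbelow_a : #{s ∈ S | s < a} ≤ a :=
    (card_le_card fun s hs => mem_range.mpr (mem_filter.mp hs).2).trans_eq (card_range a)
  have hsplit : {s ∈ S | s < b} ⊆ {s ∈ S | s < a} ∪ Ioo a b := by
    intro s hs
    obtain ⟨hsS, hsb⟩ := mem_filter.mp hs
    rcases lt_or_ge s a with hsa | has
    · exact mem_union_left _ (mem_filter.mpr ⟨hsS, hsa⟩)
    · exact mem_union_right _ (mem_Ioo.mpr ⟨lt_of_le_of_ne has fun h => ha (h ▸ hsS), hsb⟩)
  have hbelow_b := (card_le_card hsplit).trans (card_union_le _ _)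
  rw [Nat.card_Ioo] at hbelow_b
  unfold collapse
  omega

variable {S} {N v : ℕ}

lemma collapse_mem_Icc (hS : S ⊆ Icc 1 N) (hv : v ∈ Icc 1 N) (hvS : v ∉ S) :
    collapse S v ∈ Icc 1 (N - #S) := by
  have hv := mem_Icc.mp hv
  have hbelow : #{s ∈ S | s < v} ≤ v - 1 := by
    refine (card_le_card fun s hs => ?_).trans_eq (Nat.card_Ico 1 v)
    obtain ⟨hsS, hsv⟩ := mem_filter.mp hs
    exact mem_Ico.mpr ⟨(mem_Icc.mp (hS hsS)).1, hsv⟩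
  have habove : #{s ∈ S | ¬ s < v} ≤ N - v := by
    refine (card_le_card fun s hs => ?_).trans_eq (Nat.card_Ioc v N)
    obtain ⟨hsS, hsv⟩ := mem_filter.mp hs
    exact mem_Ioc.mpr ⟨lt_of_le_of_ne (not_lt.mp hsv) fun h => hvS (h ▸ hsS),
      (mem_Icc.mp (hS hsS)).2⟩
  have hcard := card_filter_add_card_filter_not (s := S) (fun s => s < v)
  rw [mem_Icc]
  unfold collapse
  omega

end Collapse

section Tableau

variable {k n m : ℕ}

lemma IsFussTableau.comp {T : Fin (k + 1) → Fin n → ℕ} (hT : IsFussTableau k n T)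
    {σ : Fin m → Fin n} (hσ : StrictMono σ) {φ : ℕ → ℕ} {s : Set ℕ}
    (hφ : StrictMonoOn φ s)
    (hs : ∀ i j, T i (σ j) ∈ s) (hrange : ∀ i j, φ (T i (σ j)) ∈ Icc 1 ((k + 1) * m)) :
    IsFussTableau k m (fun i j => φ (T i (σ j))) := by
  obtain ⟨⟨-, hinj, hrow, hcol⟩, hquad⟩ := hT
  have hφlt : ∀ i j i' j', φ (T i (σ j)) < φ (T i' (σ j')) → T i (σ j) < T i' (σ j') :=
    fun i j i' j' => (hφ.lt_iff_lt (hs i j) (hs i' j')).mp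
  refine ⟨⟨hrange, fun p q hpq => ?_, fun i j j' hjj' => ?_, fun j i i' hii' => ?_⟩, ?_⟩
  · have hT_eq := Prod.ext_iff.mp
      (@hinj (p.1, σ p.2) (q.1, σ q.2) (hφ.injOn (hs p.1 p.2) (hs q.1 q.2) hpq))
    exact Prod.ext hT_eq.1 (hσ.injective hT_eq.2)
  · exact hφ (hs i j) (hs i j') (hrow i (hσ hjj'))
  · exact hφ (hs i j) (hs i' j) (hcol (σ j) hii')
  · rintro i hi j r r' c hrr' ⟨h₁, h₂, h₃⟩
    exact hquad i hi (σ j) r r' (σ c) hrr'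
      ⟨hφlt _ _ _ _ h₁, hφlt _ _ _ _ h₂, hφlt _ _ _ _ h₃⟩

def succCol (j : Fin (n - 1)) : Fin n := ⟨j + 1, by omega⟩

lemma succCol_strictMono : StrictMono (succCol (n := n)) :=
  fun _ _ h => Fin.mk_lt_mk.mpr (Nat.succ_lt_succ h)

lemma red_eq_collapse (T : Fin (k + 1) → Fin n → ℕ) (h0 : 0 < n)
    (hcol0 : Function.Injective (T · ⟨0, h0⟩)) :
    red k n T = fun i j => collapse (univ.image (T · ⟨0, h0⟩)) (T i (succCol j)) := by
  funext i j
  simp only [red, collapse, filter_image, card_image_of_injective _ hcol0]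
  rfl

end Tableau

theorem statement14_general (k n : ℕ) (hn : 2 ≤ n)
    (T : Fin (k + 1) → Fin n → ℕ) (hT : IsFussTableau k n T) :
    IsFussTableau k (n - 1) (red k n T) := by
  have h0 : 0 < n := by omega
  set S := univ.image (T · ⟨0, h0⟩)
  have hinj := hT.1.2.1
  have hcol0 : Function.Injective (T · ⟨0, h0⟩) := fun u u' h =>
    congrArg Prod.fst (@hinj (u, _) (u', _) h)
  have hS : S ⊆ Icc 1 ((k + 1) * n) := image_subset_iff.mpr fun u _ => hT.1.1 u _
  have hnotS : ∀ i j, T i (succCol j) ∉ S := by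
    intro i j hmem
    obtain ⟨u, -, hu⟩ := mem_image.mp hmem
    have := congrArg Fin.val (congrArg Prod.snd (@hinj (u, _) (i, _) hu))
    exact Nat.succ_ne_zero _ this.symm
  rw [red_eq_collapse T h0 hcol0]
  refine hT.comp succCol_strictMono (collapse_strictMonoOn S) hnotS fun i j => ?_
  have hmem := collapse_mem_Icc hS (hT.1.1 _ _) (hnotS i j)
  rwa [card_image_of_injective _ hcol0, card_univ, Fintype.card_fin, ← Nat.mul_sub_one] at hmem

/-- For `k ≥ 1`, `n ≥ 2` and `T ∈ 𝒯ₙᵏ`, the reduced tableau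
`red(T)` belongs to `𝒯_{n-1}ᵏ`. -/
theorem statement14 (k n : ℕ) (hk : 1 ≤ k) (hn : 2 ≤ n)
    (T : Fin (k + 1) → Fin n → ℕ) (hT : IsFussTableau k n T) :
    IsFussTableau k (n - 1) (red k n T) :=
  statement14_general k n hn T hT
end
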